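/- Under weak unconfoundedness and overlap, for each treatment level w: E[Y(w)] = E[ E[Y^obs | W = w, p(w|X)] ], where Y^obs = Y(W) is the observed outcome and the inner conditional expectation is evaluated at the random value p(w|X). -/

import Mathlib

open MeasureTheory ProbabilityTheory

/-! Given `X`, the indicator `f = 1{W = w}` and `Y(w)` are conditionally independent, so
integrating fibrewise against the conditional-expectation kernel gives
`E[f Y(w) | X] = p E[Y(w) | X]` with `p = E[f | X]`. As `p` is `σ(p)`-measurable and
`σ(p) ≤ σ(X)`, the tower property and pulling `p` out carry this factorization down to `σ(p)`:
`E[f Y(w) | p] = E[f | p] E[Y(w) | p]` and `E[f | p] = p > 0`. So the ratio is `E[Y(w) | p]`,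
whose mean is `E[Y(w)]`. -/

section

variable {Ω : Type*} {m m₁ m₂ mΩ : MeasurableSpace Ω} {μ : Measure Ω} [IsFiniteMeasure μ]

theorem condExp_mul_ae_eq_of_condIndepFun [StandardBorelSpace Ω] (hm : m ≤ mΩ) {f g : Ω → ℝ}
    (hf : Measurable f) (hg : Measurable g) (hfi : Integrable f μ) (hgi : Integrable g μ)
    (hfgi : Integrable (f * g) μ) (hfg : CondIndepFun m hm f g μ) :
    μ[f * g | m] =ᵐ[μ] μ[f | m] * μ[g | m] := by
  have h_indep : ∀ᵐ ω ∂μ, IndepFun f g (condExpKernel μ m ω) := ae_of_ae_trim hm <| by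
    filter_upwards [(condIndepFun_iff_map_prod_eq_prod_map_map hf hg).1 hfg] with ω hω
    rw [indepFun_iff_map_prod_eq_prod_map_map hf.aemeasurable hg.aemeasurable]
    simpa only [Kernel.map_apply _ (hf.prodMk hg), Kernel.prod_apply, Kernel.map_apply _ hf,
      Kernel.map_apply _ hg] using hω
  filter_upwards [h_indep, condExp_ae_eq_integral_condExpKernel hm hfgi,
    condExp_ae_eq_integral_condExpKernel hm hfi, condExp_ae_eq_integral_condExpKernel hm hgi]
    with ω hω hfg_eq hf_eq hg_eq
  rw [Pi.mul_apply, hfg_eq, hf_eq, hg_eq]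
  exact hω.integral_mul_eq_mul_integral hf.aestronglyMeasurable hg.aestronglyMeasurable

theorem condExp_ae_eq_condExp_of_le_of_stronglyMeasurable {E : Type*} [NormedAddCommGroup E]
    [NormedSpace ℝ E] [CompleteSpace E] (h₂₁ : m₂ ≤ m₁) (hm₁ : m₁ ≤ mΩ) {f : Ω → E}
    (hf : StronglyMeasurable[m₂] (μ[f | m₁])) : μ[f | m₂] =ᵐ[μ] μ[f | m₁] := by
  refine (condExp_condExp_of_le h₂₁ hm₁).symm.trans ?_
  rw [condExp_of_stronglyMeasurable (h₂₁.trans hm₁) hf integrable_condExp]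

theorem condExp_mul_ae_eq_of_le_of_stronglyMeasurable (h₂₁ : m₂ ≤ m₁) (hm₁ : m₁ ≤ mΩ)
    {f g : Ω → ℝ} (hf : StronglyMeasurable[m₂] (μ[f | m₁]))
    (hfg : μ[f * g | m₁] =ᵐ[μ] μ[f | m₁] * μ[g | m₁]) :
    μ[f * g | m₂] =ᵐ[μ] μ[f | m₂] * μ[g | m₂] :=
  calc μ[f * g | m₂] =ᵐ[μ] μ[μ[f * g | m₁] | m₂] := (condExp_condExp_of_le h₂₁ hm₁).symm
    _ =ᵐ[μ] μ[μ[f | m₁] * μ[g | m₁] | m₂] := condExp_congr_ae hfg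
    _ =ᵐ[μ] μ[f | m₁] * μ[μ[g | m₁] | m₂] :=
      condExp_mul_of_stronglyMeasurable_left hf (integrable_condExp.congr hfg) integrable_condExp
    _ =ᵐ[μ] μ[f | m₂] * μ[g | m₂] :=
      (condExp_ae_eq_condExp_of_le_of_stronglyMeasurable h₂₁ hm₁ hf).symm.mul
        (condExp_condExp_of_le h₂₁ hm₁)

end

theorem mean_potential_outcome_gps_general {Ω E : Type*} [mΩ : MeasurableSpace Ω]
    [StandardBorelSpace Ω] [MeasurableSpace E]
    (μ : Measure Ω) [IsProbabilityMeasure μ] (T : ℕ)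
    (W : Ω → Fin T) (X : Ω → E) (Y : Fin T → Ω → ℝ)
    (hW : Measurable W) (hY : ∀ w, Measurable (Y w))
    (hYint : ∀ w, Integrable (Y w) μ)
    (p : Fin T → Ω → ℝ)
    (hp : ∀ w, p w = μ[(fun ω => if W ω = w then (1 : ℝ) else 0) |
        MeasurableSpace.comap X inferInstance])
    (hoverlap : ∀ w, ∀ᵐ ω ∂μ, 0 < p w ω)
    (hmX : MeasurableSpace.comap X inferInstance ≤ mΩ)
    (hweak : ∀ w : Fin T, CondIndepFun (MeasurableSpace.comap X inferInstance) hmX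
        (fun ω => if W ω = w then (1 : ℝ) else 0) (Y w) μ)
    (w : Fin T) :
    ∫ ω, Y w ω ∂μ
      = ∫ ω,
          ((μ[(fun ω' => (if W ω' = w then (1 : ℝ) else 0) * Y (W ω') ω') |
              MeasurableSpace.comap (p w) inferInstance]) ω)
          / ((μ[(fun ω' => if W ω' = w then (1 : ℝ) else 0) |
              MeasurableSpace.comap (p w) inferInstance]) ω) ∂μ := by
  set f : Ω → ℝ := fun ω => if W ω = w then 1 else 0
  have h_obs : (fun ω => f ω * Y (W ω) ω) = f * Y w := by
    funext ω
    by_cases h : W ω = w <;> simp [f, h]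
  have hf : Measurable f := .ite (hW (measurableSet_singleton w)) measurable_const measurable_const
  have hf_bdd : ∀ ω, ‖f ω‖ ≤ 1 := fun ω => by by_cases h : W ω = w <;> simp [f, h]
  have hfi : Integrable f μ :=
    (integrable_const 1).mono' hf.aestronglyMeasurable (.of_forall hf_bdd)
  have hfYi : Integrable (f * Y w) μ :=
    (hYint w).bdd_mul hf.aestronglyMeasurable (.of_forall hf_bdd)
  set 𝓧 : MeasurableSpace Ω := MeasurableSpace.comap X inferInstance
  set 𝓟 : MeasurableSpace Ω := MeasurableSpace.comap (p w) inferInstance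
  have h𝓟 : StronglyMeasurable[𝓟] (μ[f | 𝓧]) :=
    hp w ▸ (comap_measurable (p w)).stronglyMeasurable
  have h𝓟𝓧 : 𝓟 ≤ 𝓧 :=
    (hp w ▸ stronglyMeasurable_condExp : StronglyMeasurable[𝓧] (p w)).measurable.comap_le
  have h_factor : μ[f * Y w | 𝓟] =ᵐ[μ] μ[f | 𝓟] * μ[Y w | 𝓟] :=
    condExp_mul_ae_eq_of_le_of_stronglyMeasurable h𝓟𝓧 hmX h𝓟
      (condExp_mul_ae_eq_of_condIndepFun hmX hf (hY w) hfi (hYint w) hfYi (hweak w))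
  have h_pos : ∀ᵐ ω ∂μ, 0 < μ[f | 𝓟] ω := by
    filter_upwards [condExp_ae_eq_condExp_of_le_of_stronglyMeasurable h𝓟𝓧 hmX h𝓟, hoverlap w]
      with ω h_eq h_pos
    rwa [h_eq, ← hp w]
  rw [h_obs, ← integral_condExp (h𝓟𝓧.trans hmX)]
  refine integral_congr_ae ?_
  filter_upwards [h_factor, h_pos] with ω h_eq h_pos
  rw [h_eq, Pi.mul_apply, mul_div_cancel_left₀ _ h_pos.ne']

/-- Under weak unconfoundedness and overlap,
`E[Y(w)] = E[ E[Y^obs | W = w, p(w|X)] ]`, where the inner conditional expectation given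
the event `W = w` and the score `p(w|X)` is the ratio
`E[1{W=w}·Y^obs | p(w|X)] / E[1{W=w} | p(w|X)]`. -/
theorem mean_potential_outcome_gps {Ω E : Type*} [mΩ : MeasurableSpace Ω]
    [StandardBorelSpace Ω] [MeasurableSpace E]
    (μ : Measure Ω) [IsProbabilityMeasure μ] (T : ℕ)
    (W : Ω → Fin T) (X : Ω → E) (Y : Fin T → Ω → ℝ)
    (hW : Measurable W) (hX : Measurable X) (hY : ∀ w, Measurable (Y w))
    (hYint : ∀ w, Integrable (Y w) μ)
    (p : Fin T → Ω → ℝ)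
    (hp : ∀ w, p w = μ[(fun ω => if W ω = w then (1 : ℝ) else 0) |
        MeasurableSpace.comap X inferInstance])
    (hoverlap : ∀ w, ∀ᵐ ω ∂μ, 0 < p w ω)
    (hmX : MeasurableSpace.comap X inferInstance ≤ mΩ)
    (hweak : ∀ w : Fin T, CondIndepFun (MeasurableSpace.comap X inferInstance) hmX
        (fun ω => if W ω = w then (1 : ℝ) else 0) (Y w) μ)
    (w : Fin T) :
    ∫ ω, Y w ω ∂μ
      = ∫ ω,
          ((μ[(fun ω' => (if W ω' = w then (1 : ℝ) else 0) * Y (W ω') ω') |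
              MeasurableSpace.comap (p w) inferInstance]) ω)
          / ((μ[(fun ω' => if W ω' = w then (1 : ℝ) else 0) |
              MeasurableSpace.comap (p w) inferInstance]) ω) ∂μ :=
  mean_potential_outcome_gps_general (mΩ := mΩ) μ T W X Y hW hY hYint p hp hoverlap hmX hweak w
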